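/- arXiv:2309.16411 — 5 statements merged into one kernel-verified Lean document; each statement's English description precedes it below -/
import Mathlib

section
/- Let G be a finite graph on n vertices. If there is no vertex subset U with |U| ≥ 2n/3 such that the induced subgraph G[U] is an ε-expander (i.e., every subset W of U with |W| ≤ |U|/2 has at least ε|W| edges of G[U] leaving W), then G has an edge separator of size at most (2/3)εn, i.e., a set S of at most (2/3)εn edges whose removal partitions the vertices into two parts each of size at most 2n/3 with no edges between them. -/
/-!
Grow a set `A` with `|A| ≤ 2n/3` and at most `ε|A|` edges leaving it, starting from `A = ∅`.
While the complement is still larger than `2n/3`, it does not induce an `ε`-expander, so it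
contains a set `W` with `|W| ≤ |Aᶜ|/2` and fewer than `ε|W|` edges to `Aᶜ \ W`. Adding `W` to `A`
keeps the cut at most `ε|A ∪ W|`, and `|A ∪ W| ≤ (n + |A|)/2 ≤ 2n/3` because `|A| < n/3`.
Once the complement has at most `2n/3` vertices, `A` is the separator, with at most
`ε|A| ≤ (2/3)εn` crossing edges.
-/

open Finset

variable {V : Type*} [Fintype V] [DecidableEq V]

/-- Number of edges of `G` with one endpoint in `A` and the other in `W` (for disjoint `A`, `W`),
counted as ordered pairs, hence exactly once per edge. -/
def bdryTo (G : SimpleGraph V) [DecidableRel G.Adj] (A W : Finset V) : ℕ :=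
  ((A ×ˢ W).filter fun p => G.Adj p.1 p.2).card

/-- Number of boundary edges of `A` inside the induced subgraph `G[B]`:
edges of `G` with one endpoint in `A` and the other in `B \ A`. -/
def bdryIn (G : SimpleGraph V) [DecidableRel G.Adj] (B A : Finset V) : ℕ :=
  bdryTo G A (B \ A)

/-- The induced subgraph `G[U]` is an `ε`-expander: every `W ⊆ U` with `|W| ≤ |U|/2`
has at least `ε|W|` boundary edges inside `G[U]`. -/
def IsExpanderOn (G : SimpleGraph V) [DecidableRel G.Adj] (U : Finset V) (ε : ℝ) : Prop :=
  ∀ W ⊆ U, 2 * W.card ≤ U.card → ε * W.card ≤ (bdryIn G U W : ℝ)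

section Boundary

omit [Fintype V]

variable (G : SimpleGraph V) [DecidableRel G.Adj]

omit [DecidableEq V] in
lemma bdryTo_empty_left (X : Finset V) : bdryTo G ∅ X = 0 := by
  simp [bdryTo]

omit [DecidableEq V] in
lemma bdryTo_mono_right {A X Y : Finset V} (h : X ⊆ Y) : bdryTo G A X ≤ bdryTo G A Y :=
  card_le_card (filter_subset_filter _ (product_subset_product_right h))

lemma bdryTo_union_left {A W X : Finset V} (h : Disjoint A W) :
    bdryTo G (A ∪ W) X = bdryTo G A X + bdryTo G W X := by
  unfold bdryTo
  rw [union_product, filter_union, card_union_of_disjoint]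
  exact disjoint_filter_filter (disjoint_product.mpr (Or.inl h))

lemma isExpanderOn_of_nonpos (U : Finset V) {ε : ℝ} (hε : ε ≤ 0) : IsExpanderOn G U ε :=
  fun W _ _ => (mul_nonpos_of_nonpos_of_nonneg hε W.card.cast_nonneg).trans (Nat.cast_nonneg _)

lemma exists_sparse_subset_of_not_isExpanderOn {U : Finset V} {ε : ℝ}
    (h : ¬ IsExpanderOn G U ε) :
    ∃ W ⊆ U, W.Nonempty ∧ 2 * W.card ≤ U.card ∧ (bdryIn G U W : ℝ) < ε * W.card := by
  simp only [IsExpanderOn, not_forall, not_le, exists_prop] at h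
  obtain ⟨W, hWU, hsize, hsparse⟩ := h
  refine ⟨W, hWU, nonempty_iff_ne_empty.mpr ?_, hsize, hsparse⟩
  rintro rfl
  simp [bdryIn, bdryTo_empty_left] at hsparse

end Boundary

lemma bdryTo_union_compl_le (G : SimpleGraph V) [DecidableRel G.Adj] {A W : Finset V}
    (hW : W ⊆ Aᶜ) : bdryTo G (A ∪ W) (A ∪ W)ᶜ ≤ bdryTo G A Aᶜ + bdryIn G Aᶜ W := by
  rw [compl_union, ← sdiff_eq_inter_compl,
    bdryTo_union_left G (subset_compl_iff_disjoint_left.mp hW), bdryIn]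
  exact Nat.add_le_add_right (bdryTo_mono_right G sdiff_subset) _

lemma exists_balanced_cut_le_of_not_isExpanderOn (G : SimpleGraph V) [DecidableRel G.Adj]
    {ε : ℝ} (h : ∀ U : Finset V, 2 * Fintype.card V ≤ 3 * U.card → ¬ IsExpanderOn G U ε)
    (A : Finset V) (hA : 3 * A.card ≤ 2 * Fintype.card V)
    (hcut : (bdryTo G A Aᶜ : ℝ) ≤ ε * A.card) :
    ∃ V₁ : Finset V, 3 * V₁.card ≤ 2 * Fintype.card V ∧
      3 * V₁ᶜ.card ≤ 2 * Fintype.card V ∧ (bdryTo G V₁ V₁ᶜ : ℝ) ≤ ε * V₁.card := by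
  by_cases hstop : 3 * Aᶜ.card ≤ 2 * Fintype.card V
  · exact ⟨A, hA, hstop, hcut⟩
  obtain ⟨W, hWA, hW, hWsize, hWsparse⟩ :=
    exists_sparse_subset_of_not_isExpanderOn G (h Aᶜ (by omega))
  have hcard : (A ∪ W).card = A.card + W.card :=
    card_union_of_disjoint (subset_compl_iff_disjoint_left.mp hWA)
  have hAW : 3 * (A ∪ W).card ≤ 2 * Fintype.card V := by
    have := card_compl_add_card A
    omega
  have hcutAW : (bdryTo G (A ∪ W) (A ∪ W)ᶜ : ℝ) ≤ ε * (A ∪ W).card := by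
    have := (Nat.cast_le (α := ℝ)).mpr (bdryTo_union_compl_le G hWA)
    push_cast at this
    rw [hcard]
    push_cast
    linarith
  exact exists_balanced_cut_le_of_not_isExpanderOn G h (A ∪ W) hAW hcutAW
termination_by Aᶜ.card
decreasing_by
  rw [compl_union, ← sdiff_eq_inter_compl]
  exact card_lt_card (sdiff_ssubset hWA hW)

/-- If no `U` with `|U| ≥ 2n/3` induces an `ε`-expander, then `G` has an edge separator
(a balanced vertex bipartition with few crossing edges) of size at most `(2/3)εn`. -/
theorem stmt0 (G : SimpleGraph V) [DecidableRel G.Adj] (ε : ℝ)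
    (h : ¬ ∃ U : Finset V, 2 * Fintype.card V ≤ 3 * U.card ∧ IsExpanderOn G U ε) :
    ∃ V₁ : Finset V, 3 * V₁.card ≤ 2 * Fintype.card V ∧ 3 * V₁ᶜ.card ≤ 2 * Fintype.card V ∧
      (bdryTo G V₁ V₁ᶜ : ℝ) ≤ 2 / 3 * ε * Fintype.card V := by
  push Not at h
  have hε : 0 ≤ ε := by
    by_contra! hε
    exact h univ (by rw [card_univ]; omega) (isExpanderOn_of_nonpos G univ hε.le)
  obtain ⟨V₁, h₁, h₂, hcut⟩ := exists_balanced_cut_le_of_not_isExpanderOn G h ∅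
    (by simp) (by simp [bdryTo_empty_left])
  have hV₁ : (3 * V₁.card : ℝ) ≤ 2 * Fintype.card V := by exact_mod_cast h₁
  refine ⟨V₁, h₁, h₂, hcut.trans ?_⟩
  nlinarith
end

section
/- There is a universal constant c such that the following holds. Let G = (V,E) be a graph on n vertices such that no subset U ⊆ V with |U| ≥ m induces an ε-expander subgraph G[U]. Then V can be partitioned into sets A_1, ..., A_t with |A_i| < 3m for all i, and the number of edges of G with endpoints in different parts A_i is at most c·log(n)·εn. -/
open Finset

variable {V : Type*} [Fintype V] [DecidableEq V]

/-! Recursive bisection: a set `U` with `|U| ≥ m` is not an `ε`-expander, so some `W ⊆ U` with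
`|W| ≤ |U|/2` sends fewer than `ε|W|` edges to `U \ W`. Cut there and recurse on both sides,
stopping below size `m`. With `φ(n) = n log₂ n`, the halving condition gives
`φ(|W|) + |W| + φ(|U \ W|) ≤ φ(|U|)`, so by induction at most `ε φ(|U|)` edges are cut. -/

lemma mul_logb_two_add_le {w d : ℕ} (hw : 0 < w) (hwd : w ≤ d) :
    w * Real.logb 2 w + w + d * Real.logb 2 d ≤
      ((w + d : ℕ) : ℝ) * Real.logb 2 (w + d : ℕ) := by
  have hw' : (0 : ℝ) < w := by exact_mod_cast hw
  have hwd' : (w : ℝ) ≤ d := by exact_mod_cast hwd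
  have hlogw : Real.logb 2 w + 1 ≤ Real.logb 2 (w + d : ℕ) := by
    calc Real.logb 2 w + 1 = Real.logb 2 (2 * w) := by
          rw [Real.logb_mul two_ne_zero hw'.ne', Real.logb_self_eq_one one_lt_two, add_comm]
      _ ≤ Real.logb 2 (w + d : ℕ) := by
          push_cast
          exact Real.logb_le_logb_of_le one_lt_two (by positivity) (by linarith)
  have hlogd : Real.logb 2 d ≤ Real.logb 2 (w + d : ℕ) := by
    push_cast
    exact Real.logb_le_logb_of_le one_lt_two (by linarith) (by linarith)
  calc w * Real.logb 2 w + w + d * Real.logb 2 d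
      = w * (Real.logb 2 w + 1) + d * Real.logb 2 d := by ring
    _ ≤ w * Real.logb 2 (w + d : ℕ) + d * Real.logb 2 (w + d : ℕ) := by gcongr
    _ = ((w + d : ℕ) : ℝ) * Real.logb 2 (w + d : ℕ) := by push_cast; ring

lemma Fin.castAdd_lt_natAdd {s t : ℕ} (i : Fin s) (j : Fin t) :
    Fin.castAdd t i < Fin.natAdd s j := by
  rw [Fin.lt_def, Fin.val_castAdd, Fin.val_natAdd]
  omega

section

variable {α : Type*} [DecidableEq α] (G : SimpleGraph α) [DecidableRel G.Adj]

def crossingCount {ι : Type*} [LinearOrder ι] (U : Finset α) (part : α → ι) : ℕ :=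
  #{p ∈ U ×ˢ U | G.Adj p.1 p.2 ∧ part p.1 < part p.2}

lemma card_filter_union_product_union {A B : Finset α} (hAB : Disjoint A B)
    (P : α × α → Prop) [DecidablePred P] :
    #{p ∈ (A ∪ B) ×ˢ (A ∪ B) | P p} =
      #{p ∈ A ×ˢ A | P p} + #{p ∈ A ×ˢ B | P p} + #{p ∈ B ×ˢ A | P p} +
        #{p ∈ B ×ˢ B | P p} := by
  have hd {s t s' t' : Finset α} (h : Disjoint s s' ∨ Disjoint t t') :
      Disjoint {p ∈ s ×ˢ t | P p} {p ∈ s' ×ˢ t' | P p} :=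
    disjoint_filter_filter (disjoint_product.2 h)
  simp only [union_product, product_union, filter_union]
  rw [card_union_of_disjoint, card_union_of_disjoint, card_union_of_disjoint]
  · omega
  all_goals simp [hd, hAB, hAB.symm]

def appendParts {s t : ℕ} (W : Finset α) (f : α → Fin s) (g : α → Fin t) : α → Fin (s + t) :=
  fun v => if v ∈ W then Fin.castAdd t (f v) else Fin.natAdd s (g v)

variable {s t : ℕ} {W D : Finset α} {f : α → Fin s} {g : α → Fin t} {v : α}

lemma appendParts_of_mem (hv : v ∈ W) : appendParts W f g v = Fin.castAdd t (f v) := if_pos hv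

lemma appendParts_of_notMem (hv : v ∉ W) : appendParts W f g v = Fin.natAdd s (g v) :=
  if_neg hv

lemma crossingCount_appendParts (hWD : Disjoint W D) :
    crossingCount G (W ∪ D) (appendParts W f g) =
      crossingCount G W f + bdryTo G W D + crossingCount G D g := by
  have hD := disjoint_right.1 hWD
  have hWW : {p ∈ W ×ˢ W | G.Adj p.1 p.2 ∧ appendParts W f g p.1 < appendParts W f g p.2} =
      {p ∈ W ×ˢ W | G.Adj p.1 p.2 ∧ f p.1 < f p.2} :=
    filter_congr fun p hp => by
      obtain ⟨h₁, h₂⟩ := mem_product.1 hp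
      simp [appendParts_of_mem, h₁, h₂, (Fin.strictMono_castAdd t).lt_iff_lt]
  have hcut : {p ∈ W ×ˢ D | G.Adj p.1 p.2 ∧ appendParts W f g p.1 < appendParts W f g p.2} =
      {p ∈ W ×ˢ D | G.Adj p.1 p.2} :=
    filter_congr fun p hp => by
      obtain ⟨h₁, h₂⟩ := mem_product.1 hp
      simp [appendParts_of_mem, appendParts_of_notMem, h₁, hD h₂, Fin.castAdd_lt_natAdd]
  have hDW :
      {p ∈ D ×ˢ W | G.Adj p.1 p.2 ∧ appendParts W f g p.1 < appendParts W f g p.2} = ∅ :=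
    filter_false_of_mem fun p hp => by
      obtain ⟨h₁, h₂⟩ := mem_product.1 hp
      simp [appendParts_of_mem, appendParts_of_notMem, hD h₁, h₂, (Fin.castAdd_lt_natAdd _ _).le]
  have hDD : {p ∈ D ×ˢ D | G.Adj p.1 p.2 ∧ appendParts W f g p.1 < appendParts W f g p.2} =
      {p ∈ D ×ˢ D | G.Adj p.1 p.2 ∧ g p.1 < g p.2} :=
    filter_congr fun p hp => by
      obtain ⟨h₁, h₂⟩ := mem_product.1 hp
      simp [appendParts_of_notMem, hD h₁, hD h₂]
  rw [crossingCount, card_filter_union_product_union hWD, hWW, hcut, hDW, hDD, card_empty]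
  rfl

lemma card_filter_appendParts_lt {m : ℕ} (hWD : Disjoint W D)
    (hf : ∀ i, #{v ∈ W | f v = i} < m) (hg : ∀ j, #{v ∈ D | g v = j} < m) :
    ∀ k, #{v ∈ W ∪ D | appendParts W f g v = k} < m := by
  have hne (i : Fin s) (j : Fin t) : Fin.castAdd t i ≠ Fin.natAdd s j :=
    (Fin.castAdd_lt_natAdd i j).ne
  rw [Fin.forall_fin_add]
  constructor
  · intro i
    convert hf i using 2
    ext v
    by_cases hv : v ∈ W
    · simp [appendParts_of_mem hv, hv]
    · simp [appendParts_of_notMem hv, hv, (hne _ _).symm]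
  · intro j
    convert hg j using 2
    ext v
    by_cases hv : v ∈ W
    · simp [appendParts_of_mem hv, hv, hne, disjoint_left.1 hWD hv]
    · simp [appendParts_of_notMem hv, hv]

lemma exists_sparse_cut_of_not_isExpanderOn {U : Finset α} {ε : ℝ}
    (h : ¬ IsExpanderOn G U ε) :
    ∃ W ⊆ U, W.Nonempty ∧ 2 * #W ≤ #U ∧ (bdryIn G U W : ℝ) < ε * #W := by
  simp only [IsExpanderOn, not_forall, not_le, exists_prop] at h
  obtain ⟨W, hWU, hW2, hcut⟩ := h
  refine ⟨W, hWU, nonempty_iff_ne_empty.2 ?_, hW2, hcut⟩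
  rintro rfl
  rw [card_empty, Nat.cast_zero, mul_zero] at hcut
  exact hcut.not_ge (Nat.cast_nonneg _)

theorem exists_partition_crossingCount_le {m : ℕ} {ε : ℝ} (hε : 0 ≤ ε)
    (hno : ∀ U : Finset α, m ≤ #U → ¬ IsExpanderOn G U ε) (U : Finset α) :
    ∃ (t : ℕ) (part : α → Fin t), (∀ j, #{v ∈ U | part v = j} < m) ∧
      (crossingCount G U part : ℝ) ≤ ε * #U * Real.logb 2 #U := by
  induction U using Finset.strongInduction with
  | H U ih =>
  by_cases hsmall : #U < m
  · refine ⟨1, fun _ => 0, fun _ => (card_filter_le _ _).trans_lt hsmall, ?_⟩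
    simp only [crossingCount, lt_self_iff_false, and_false, filter_false, card_empty,
      Nat.cast_zero]
    have : 0 ≤ Real.logb 2 #U :=
      div_nonneg (Real.log_natCast_nonneg _) (Real.log_nonneg one_le_two)
    positivity
  obtain ⟨W, hWU, hW, hW2, hcut⟩ :=
    exists_sparse_cut_of_not_isExpanderOn G (hno U (not_lt.1 hsmall))
  obtain ⟨s, f, hf, hfW⟩ := ih W (hWU.ssubset_of_ne (by rintro rfl; have := hW.card_pos; omega))
  obtain ⟨t, g, hg, hgD⟩ := ih (U \ W) (sdiff_ssubset hWU hW)
  have hWD : Disjoint W (U \ W) := disjoint_sdiff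
  have hUWD : W ∪ U \ W = U := union_sdiff_of_subset hWU
  refine ⟨s + t, appendParts W f g, hUWD ▸ card_filter_appendParts_lt hWD hf hg, ?_⟩
  have hlog := mul_logb_two_add_le (d := #(U \ W)) hW.card_pos
    (by rw [← hUWD, card_union_of_disjoint hWD] at hW2; omega)
  have hbdry : (bdryTo G W (U \ W) : ℝ) ≤ ε * #W := hcut.le
  rw [← hUWD, crossingCount_appendParts G hWD, card_union_of_disjoint hWD]
  calc ((crossingCount G W f + bdryTo G W (U \ W) + crossingCount G (U \ W) g : ℕ) : ℝ)
      ≤ ε * #W * Real.logb 2 #W + ε * #W + ε * #(U \ W) * Real.logb 2 #(U \ W) := by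
        push_cast; linarith
    _ = ε * (#W * Real.logb 2 #W + #W + #(U \ W) * Real.logb 2 #(U \ W)) := by ring
    _ ≤ ε * (((#W + #(U \ W) : ℕ) : ℝ) * Real.logb 2 (#W + #(U \ W) : ℕ)) := by gcongr
    _ = _ := by ring

end

/-- There is a universal constant `c` such that any graph with no induced `ε`-expander on `m` or
more vertices can be partitioned into parts of size `< 3m` with at most `c·log(n)·εn` crossing
edges (each crossing edge counted once via the ordering of the parts). -/
theorem stmt4 : ∃ c : ℝ, 0 < c ∧
    ∀ (V : Type) (_ : Fintype V) (_ : DecidableEq V)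
      (G : SimpleGraph V) (_ : DecidableRel G.Adj) (m : ℕ) (ε : ℝ), 0 ≤ ε →
      (¬ ∃ U : Finset V, m ≤ U.card ∧ IsExpanderOn G U ε) →
      ∃ (t : ℕ) (part : V → Fin t),
        (∀ j : Fin t, (Finset.univ.filter fun v => part v = j).card < 3 * m) ∧
        ((((Finset.univ ×ˢ Finset.univ).filter
            fun p : V × V => G.Adj p.1 p.2 ∧ part p.1 < part p.2).card : ℝ)
          ≤ c * Real.log (Fintype.card V) * ε * Fintype.card V) := by
  refine ⟨1 / Real.log 2, by positivity, ?_⟩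
  intro V _ _ G _ m ε hε hno
  obtain ⟨t, part, hsmall, hcross⟩ :=
    exists_partition_crossingCount_le G hε (fun U hU hexp => hno ⟨U, hU, hexp⟩) univ
  refine ⟨t, part, fun j => (hsmall j).trans_le (by omega), ?_⟩
  calc _ = (crossingCount G univ part : ℝ) := rfl
    _ ≤ _ := hcross
    _ = _ := by rw [card_univ, Real.logb]; ring
end

section
/- Let G be the connectivity graph of a classical linear code C with parameters [n,k,d]. Suppose the vertex set of G is partitioned as A ⊔ B_1 ⊔ ... ⊔ B_s such that no edge of G joins two distinct sets B_i and B_j. Then either d ≤ max_i |B_i| or k ≤ |A|. -/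
/-! If `k > |A|`, restriction to the bits of `A` is not injective on the code, so some nonzero
codeword `z` vanishes on `A`. Take a block `B_i` on which `z` is nonzero. A check meeting the
support of `z` inside `B_i` cannot meet it anywhere else: outside `A ∪ B_i` that would be an edge
between two blocks, and on `A` the word `z` vanishes. Hence cutting `z` down to `B_i` keeps every
parity check satisfied, giving a nonzero codeword of weight at most `|B_i|`. -/

open Finset

variable {V : Type*} [Fintype V] [DecidableEq V]

/-- Connectivity graph of a classical code with check matrix `H`: bits are vertices, two bits are
adjacent iff some check contains both in its support. -/
def connGraph {r n : ℕ} (H : Matrix (Fin r) (Fin n) (ZMod 2)) : SimpleGraph (Fin n) where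
  Adj u v := u ≠ v ∧ ∃ i, H i u ≠ 0 ∧ H i v ≠ 0
  symm := ⟨fun _ _ ⟨h1, i, ha, hb⟩ => ⟨h1.symm, i, hb, ha⟩⟩
  loopless := ⟨fun _ h => h.1 rfl⟩

instance {r n : ℕ} (H : Matrix (Fin r) (Fin n) (ZMod 2)) : DecidableRel (connGraph H).Adj :=
  fun _ _ => instDecidableAnd

theorem Submodule.exists_ne_zero_forall_eq_zero_of_card_lt_finrank {K ι : Type*} [Field K]
    [Fintype ι] (W : Submodule K (ι → K)) (A : Finset ι) (hA : A.card < Module.finrank K W) :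
    ∃ x ∈ W, x ≠ 0 ∧ ∀ a ∈ A, x a = 0 := by
  let restrict : W →ₗ[K] (A → K) :=
    (LinearMap.funLeft K K (Subtype.val : A → ι)).comp W.subtype
  have hker : LinearMap.ker restrict ≠ ⊥ :=
    LinearMap.ker_ne_bot_of_finrank_lt (by simpa using hA)
  obtain ⟨⟨x, hxW⟩, hx, hx0⟩ := Submodule.exists_mem_ne_zero_of_ne_bot hker
  refine ⟨x, hxW, by simpa using hx0, fun a ha => ?_⟩
  simpa [restrict] using congrFun hx ⟨a, ha⟩

theorem Matrix.mulVec_indicator_eq_zero {R m ι : Type*} [CommRing R] [Fintype ι]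
    {H : Matrix m ι R} {x : ι → R} (hx : H.mulVec x = 0) (S : Set ι)
    (hsep : ∀ r, ∀ u ∈ S, ∀ v ∉ S, H r u * x u ≠ 0 → H r v * x v = 0) :
    H.mulVec (S.indicator x) = 0 := by
  classical
  funext r
  by_cases hr : ∃ u ∈ S, H r u * x u ≠ 0
  · obtain ⟨u, hu, hux⟩ := hr
    rw [← congrFun hx r]
    refine sum_congr rfl fun v _ => ?_
    by_cases hv : v ∈ S
    · simp [Set.indicator_of_mem hv]
    · simp [Set.indicator_of_notMem hv, hsep r u hu v hv hux]
  · push Not at hr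
    refine sum_eq_zero fun v _ => ?_
    by_cases hv : v ∈ S
    · simp [Set.indicator_of_mem hv, hr v hv]
    · simp [Set.indicator_of_notMem hv]

theorem hammingNorm_indicator_le_card {ι R : Type*} [Fintype ι] [Zero R] [DecidableEq R]
    (S : Finset ι) (x : ι → R) : hammingNorm ((S : Set ι).indicator x) ≤ S.card := by
  refine card_le_card fun u hu => ?_
  by_contra huS
  exact (mem_filter.mp hu).2 (Set.indicator_of_notMem (by simpa using huS) x)

theorem stmt6_general (n r k d s : ℕ) (H : Matrix (Fin r) (Fin n) (ZMod 2))
    (hk : Module.finrank (ZMod 2) (LinearMap.ker H.mulVecLin) = k)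
    (hd : ∀ x : Fin n → ZMod 2, H.mulVec x = 0 → x ≠ 0 → d ≤ hammingNorm x)
    (A : Finset (Fin n)) (B : Fin s → Finset (Fin n))
    (hcover : A ∪ Finset.univ.biUnion B = Finset.univ)
    (hnoedge : ∀ i j, i ≠ j → ∀ u ∈ B i, ∀ v ∈ B j, ¬ (connGraph H).Adj u v) :
    d ≤ Finset.univ.sup (fun i => (B i).card) ∨ k ≤ A.card := by
  refine (le_or_gt k A.card).symm.imp (fun hAk => ?_) id
  obtain ⟨z, hzker, hz0, hzA⟩ :=
    (LinearMap.ker H.mulVecLin).exists_ne_zero_forall_eq_zero_of_card_lt_finrank A (hk ▸ hAk)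
  replace hzker : H.mulVec z = 0 := hzker
  have mem_block : ∀ v, z v ≠ 0 → ∃ j, v ∈ B j := fun v hv => by
    have hvA : v ∉ A := fun h => hv (hzA v h)
    have hv' : v ∈ A ∪ univ.biUnion B := hcover ▸ mem_univ v
    simpa [hvA] using hv'
  obtain ⟨v, hv⟩ := Function.ne_iff.mp hz0
  obtain ⟨i, hvi⟩ := mem_block v hv
  have hsep : ∀ c, ∀ u ∈ (B i : Set (Fin n)), ∀ w ∉ (B i : Set (Fin n)),
      H c u * z u ≠ 0 → H c w * z w = 0 := by
    intro c u hu w hw hu0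
    by_contra hw0
    obtain ⟨j, hwj⟩ := mem_block w (right_ne_zero_of_mul hw0)
    have hij : i ≠ j := by rintro rfl; exact hw hwj
    exact hnoedge i j hij u hu w hwj
      ⟨by rintro rfl; exact hw hu, c, left_ne_zero_of_mul hu0, left_ne_zero_of_mul hw0⟩
  have hy0 : (B i : Set (Fin n)).indicator z ≠ 0 := fun h => hv <| by
    simpa [Set.indicator_of_mem (mem_coe.mpr hvi)] using congrFun h v
  calc d ≤ hammingNorm ((B i : Set (Fin n)).indicator z) :=
        hd _ (Matrix.mulVec_indicator_eq_zero hzker _ hsep) hy0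
    _ ≤ (B i).card := hammingNorm_indicator_le_card (B i) z
    _ ≤ Finset.univ.sup (fun i => (B i).card) := le_sup (f := fun i => (B i).card) (mem_univ i)

/-- Partition lemma for classical codes: if the bits of an `[n,k,d]` code are partitioned into
`A ⊔ B_1 ⊔ ... ⊔ B_s` with no edge of the connectivity graph joining two distinct `B_i`'s, then
`d ≤ max_i |B_i|` or `k ≤ |A|`. -/
theorem stmt6 (n r k d s : ℕ) (H : Matrix (Fin r) (Fin n) (ZMod 2))
    (hk : Module.finrank (ZMod 2) (LinearMap.ker H.mulVecLin) = k)
    (hd : ∀ x : Fin n → ZMod 2, H.mulVec x = 0 → x ≠ 0 → d ≤ hammingNorm x)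
    (A : Finset (Fin n)) (B : Fin s → Finset (Fin n))
    (hdisjB : ∀ i j, i ≠ j → Disjoint (B i) (B j))
    (hdisjA : ∀ i, Disjoint A (B i))
    (hcover : A ∪ Finset.univ.biUnion B = Finset.univ)
    (hnoedge : ∀ i j, i ≠ j → ∀ u ∈ B i, ∀ v ∈ B j, ¬ (connGraph H).Adj u v) :
    d ≤ Finset.univ.sup (fun i => (B i).card) ∨ k ≤ A.card :=
  stmt6_general n r k d s H hk hd A B hcover hnoedge
end

section
/- Let G be the connectivity graph of an [[n,k,d]] stabilizer code. Suppose the vertices of G are partitioned as A ⊔ B_1 ⊔ ... ⊔ B_s ⊔ C_1 ⊔ ... ⊔ C_r such that no edge joins two distinct B_i's and no edge joins two distinct C_j's. Then either d ≤ max(max_i |B_i|, max_j |C_j|) or k ≤ |A|. -/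
/-
Write `𝒮` for the stabilizer space and `P(R)` for the Paulis supported on a set of qubits `R`;
call `R` correctable when every Pauli in `P(R)` commuting with `𝒮` lies in `𝒮`. Regions with
fewer than `d` qubits are correctable, and so is a union of such regions with no edge of the
connectivity graph between them, because each check meets at most one of them; hence `⋃ B_i` and
`⋃ C_j` are correctable when `d` exceeds every `|B_i|` and `|C_j|`. For correctable `R` the
symplectic complement of `𝒮 + P(Rᶜ)` is `𝒮 ∩ P(R)`, which gives
`dim 𝒮 + 2|Rᶜ| + dim (𝒮 ∩ P(R)) = 2n + dim (𝒮 ∩ P(Rᶜ))`.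
Adding these identities for two disjoint correctable regions `R₁, R₂` and using
`P(R₁) ⊆ P(R₂ᶜ)`, `P(R₂) ⊆ P(R₁ᶜ)` yields `|R₁| + |R₂| ≤ dim 𝒮 = n - k`.
-/

open Finset

variable {V : Type*} [Fintype V] [DecidableEq V]

/-- The symplectic form on `F_2^{2n}`, in the X/Z (symplectic) representation of `n`-qubit
Pauli operators: two Paulis commute iff the form vanishes. -/
def sympl {n : ℕ} (a b : Fin n → ZMod 2 × ZMod 2) : ZMod 2 :=
  ∑ j, ((a j).1 * (b j).2 + (a j).2 * (b j).1)

/-- The weight of a Pauli operator in symplectic representation: the number of qubits on which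
it acts nontrivially. -/
def qWeight {n : ℕ} (v : Fin n → ZMod 2 × ZMod 2) : ℕ :=
  (Finset.univ.filter fun j => v j ≠ 0).card

/-- Connectivity graph of a stabilizer code with checks `S`: qubits are vertices, two qubits are
adjacent iff some check acts nontrivially on both. -/
def qConnGraph {r n : ℕ} (S : Fin r → Fin n → ZMod 2 × ZMod 2) : SimpleGraph (Fin n) where
  Adj u v := u ≠ v ∧ ∃ i, S i u ≠ 0 ∧ S i v ≠ 0
  symm := ⟨fun _ _ ⟨h1, i, ha, hb⟩ => ⟨h1.symm, i, hb, ha⟩⟩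
  loopless := ⟨fun _ h => h.1 rfl⟩

instance {r n : ℕ} (S : Fin r → Fin n → ZMod 2 × ZMod 2) : DecidableRel (qConnGraph S).Adj :=
  fun u v => (instDecidableAnd : Decidable (u ≠ v ∧ ∃ i, S i u ≠ 0 ∧ S i v ≠ 0))

/-- The stabilizer group (modulo phases) generated by the checks `S`. -/
def stabSpan {r n : ℕ} (S : Fin r → Fin n → ZMod 2 × ZMod 2) :
    Submodule (ZMod 2) (Fin n → ZMod 2 × ZMod 2) :=
  Submodule.span (ZMod 2) (Set.range S)

open Module

theorem LinearMap.BilinForm.orthogonal_sup {R M : Type*} [CommSemiring R] [AddCommMonoid M]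
    [Module R M] (B : LinearMap.BilinForm R M) (W₁ W₂ : Submodule R M) :
    B.orthogonal (W₁ ⊔ W₂) = B.orthogonal W₁ ⊓ B.orthogonal W₂ := by
  refine le_antisymm (le_inf (orthogonal_le le_sup_left) (orthogonal_le le_sup_right)) ?_
  rintro v ⟨h₁, h₂⟩ u hu
  obtain ⟨u₁, hu₁, u₂, hu₂, rfl⟩ := Submodule.mem_sup.mp hu
  rw [map_add, LinearMap.add_apply, h₁ u₁ hu₁, h₂ u₂ hu₂, add_zero]

section Symplectic

variable {n : ℕ}

lemma sympl_comm (a b : Fin n → ZMod 2 × ZMod 2) : sympl a b = sympl b a :=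
  Finset.sum_congr rfl fun _ _ => by ring

lemma sympl_eq_zero_of_disjoint_support {a b : Fin n → ZMod 2 × ZMod 2}
    (h : ∀ j, a j = 0 ∨ b j = 0) : sympl a b = 0 :=
  Finset.sum_eq_zero fun j _ => by rcases h j with h | h <;> simp [h]

lemma sympl_single_left (j : Fin n) (p : ZMod 2 × ZMod 2) (v : Fin n → ZMod 2 × ZMod 2) :
    sympl (Pi.single j p) v = p.1 * (v j).2 + p.2 * (v j).1 := by
  rw [sympl, Finset.sum_eq_single j (fun i _ hij => by simp [Pi.single_eq_of_ne hij]) (by simp)]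
  simp

lemma apply_eq_zero_of_sympl_single {v : Fin n → ZMod 2 × ZMod 2} {j : Fin n}
    (h : ∀ p, sympl (Pi.single j p) v = 0) : v j = 0 := by
  have hX := h (1, 0)
  have hZ := h (0, 1)
  simp only [sympl_single_left, one_mul, zero_mul, add_zero, zero_add] at hX hZ
  exact Prod.ext hZ hX

variable (n) in
def symplForm : LinearMap.BilinForm (ZMod 2) (Fin n → ZMod 2 × ZMod 2) :=
  LinearMap.mk₂ (ZMod 2) sympl
    (fun _ _ _ => by
      simp only [sympl, Pi.add_apply, Prod.fst_add, Prod.snd_add, add_mul, Finset.sum_add_distrib]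
      ring)
    (fun _ _ _ => by
      simp only [sympl, Pi.smul_apply, Prod.smul_fst, Prod.smul_snd, smul_eq_mul, Finset.mul_sum]
      exact sum_congr rfl fun _ _ => by ring)
    (fun _ _ _ => by
      simp only [sympl, Pi.add_apply, Prod.fst_add, Prod.snd_add, mul_add, Finset.sum_add_distrib]
      ring)
    (fun _ _ _ => by
      simp only [sympl, Pi.smul_apply, Prod.smul_fst, Prod.smul_snd, smul_eq_mul, Finset.mul_sum]
      exact sum_congr rfl fun _ _ => by ring)

@[simp] lemma symplForm_apply (a b : Fin n → ZMod 2 × ZMod 2) : symplForm n a b = sympl a b :=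
  rfl

lemma ker_symplForm : LinearMap.ker (symplForm n) = ⊥ :=
  (Submodule.eq_bot_iff _).mpr fun v hv => funext fun j =>
    apply_eq_zero_of_sympl_single fun p => by
      rw [sympl_comm, ← symplForm_apply, LinearMap.mem_ker.mp hv, LinearMap.zero_apply]

end Symplectic

section PaulisOn

variable {n : ℕ}

variable (n) in
def paulisOn (R : Finset (Fin n)) : Submodule (ZMod 2) (Fin n → ZMod 2 × ZMod 2) :=
  ⨅ j ∈ (↑R : Set (Fin n))ᶜ, LinearMap.ker (LinearMap.proj j)

lemma mem_paulisOn {R : Finset (Fin n)} {v : Fin n → ZMod 2 × ZMod 2} :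
    v ∈ paulisOn n R ↔ ∀ j ∉ R, v j = 0 := by
  simp [paulisOn]

lemma paulisOn_mono {R R' : Finset (Fin n)} (h : R ⊆ R') : paulisOn n R ≤ paulisOn n R' :=
  fun _ hv => mem_paulisOn.mpr fun j hj => mem_paulisOn.mp hv j fun hjR => hj (h hjR)

lemma finrank_paulisOn (R : Finset (Fin n)) : finrank (ZMod 2) (paulisOn n R) = 2 * R.card := by
  unfold paulisOn
  rw [LinearEquiv.finrank_eq (LinearMap.iInfKerProjEquiv (ZMod 2) (fun _ => ZMod 2 × ZMod 2)
    disjoint_compl_right (by simp))]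
  rw [Module.finrank_pi_fintype]
  simp [mul_comm]

lemma orthogonal_paulisOn_compl (R : Finset (Fin n)) :
    (symplForm n).orthogonal (paulisOn n Rᶜ) = paulisOn n R := by
  ext v
  rw [LinearMap.BilinForm.mem_orthogonal_iff, mem_paulisOn]
  constructor
  · intro h j hj
    refine apply_eq_zero_of_sympl_single fun p => h _ (mem_paulisOn.mpr fun i hi => ?_)
    exact Pi.single_eq_of_ne (by rintro rfl; exact hi (mem_compl.mpr hj)) _
  · intro hv u hu
    refine sympl_eq_zero_of_disjoint_support fun j => ?_
    by_cases hj : j ∈ R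
    · exact .inl (mem_paulisOn.mp hu j (notMem_compl.mpr hj))
    · exact .inr (hv j hj)

lemma qWeight_le_card {R : Finset (Fin n)} {v : Fin n → ZMod 2 × ZMod 2}
    (hv : v ∈ paulisOn n R) : qWeight v ≤ R.card :=
  card_le_card fun j hj => by
    by_contra hjR
    exact (mem_filter.mp hj).2 (mem_paulisOn.mp hv j hjR)

end PaulisOn

section Correctable

variable {n r : ℕ} (S : Fin r → Fin n → ZMod 2 × ZMod 2)

lemma mem_orthogonal_stabSpan {v : Fin n → ZMod 2 × ZMod 2} :
    v ∈ (symplForm n).orthogonal (stabSpan S) ↔ ∀ i, sympl (S i) v = 0 := by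
  refine ⟨fun h i => h (S i) (Submodule.subset_span ⟨i, rfl⟩), fun h u hu => ?_⟩
  have hker : stabSpan S ≤ LinearMap.ker ((symplForm n).flip v) := by
    rw [stabSpan, Submodule.span_le]
    rintro _ ⟨i, rfl⟩
    exact h i
  exact hker hu

lemma stabSpan_le_orthogonal (hcomm : ∀ i j, sympl (S i) (S j) = 0) :
    stabSpan S ≤ (symplForm n).orthogonal (stabSpan S) := by
  rw [stabSpan, Submodule.span_le]
  rintro _ ⟨j, rfl⟩
  exact (mem_orthogonal_stabSpan S).mpr fun i => hcomm i j

/-- Every logical operator supported on `R` is trivial, i.e. the erasure of `R` is correctable. -/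
def IsCorrectable (R : Finset (Fin n)) : Prop :=
  (symplForm n).orthogonal (stabSpan S) ⊓ paulisOn n R ≤ stabSpan S

lemma isCorrectable_of_card_lt {d : ℕ}
    (hd : ∀ v, (∀ i, sympl (S i) v = 0) → v ∉ stabSpan S → d ≤ qWeight v)
    {R : Finset (Fin n)} (hR : R.card < d) : IsCorrectable S R := by
  rintro v ⟨hv, hvR⟩
  by_contra hvS
  have := hd v ((mem_orthogonal_stabSpan S).mp hv) hvS
  have := qWeight_le_card hvR
  omega

lemma sympl_indicator_of_disjoint_support {a v : Fin n → ZMod 2 × ZMod 2} {R : Finset (Fin n)}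
    (h : ∀ j ∉ R, a j = 0 ∨ v j = 0) :
    sympl a ((↑R : Set (Fin n)).indicator v) = sympl a v := by
  have hcompl : sympl a ((↑R : Set (Fin n))ᶜ.indicator v) = 0 :=
    sympl_eq_zero_of_disjoint_support fun j => by
      by_cases hj : j ∈ R
      · exact .inr (Set.indicator_of_notMem (by simpa using hj) _)
      · exact (h j hj).imp_right fun hvj => by simp [hvj]
  have hsplit :=
    map_add (symplForm n a) ((↑R : Set (Fin n)).indicator v) ((↑R : Set (Fin n))ᶜ.indicator v)
  simp only [symplForm_apply, Set.indicator_self_add_compl] at hsplit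
  rw [hsplit, hcompl, add_zero]

/-- A check meeting one of the pieces `B i` vanishes on all the others, so the restriction of a
logical operator to a piece still commutes with every check. -/
theorem isCorrectable_biUnion {ι : Type*} [Fintype ι] (B : ι → Finset (Fin n))
    (hdisj : ∀ i j, i ≠ j → Disjoint (B i) (B j))
    (hnoedge : ∀ i j, i ≠ j → ∀ u ∈ B i, ∀ v ∈ B j, ¬ (qConnGraph S).Adj u v)
    (hB : ∀ i, IsCorrectable S (B i)) : IsCorrectable S (univ.biUnion B) := by
  intro v hv
  obtain ⟨hv, hvR⟩ := Submodule.mem_inf.mp hv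
  rw [mem_orthogonal_stabSpan] at hv
  have hsum : v = ∑ i, (↑(B i) : Set (Fin n)).indicator v := by
    have hsupp : (⋃ i ∈ univ, (↑(B i) : Set (Fin n))).indicator v = v :=
      Set.indicator_eq_self.mpr <| Function.support_subset_iff'.mpr fun j hj =>
        mem_paulisOn.mp hvR j (by simpa using hj)
    rw [Finset.sum_fn, ← Finset.indicator_biUnion _ _ fun i _ j _ hij =>
      Finset.disjoint_coe.mpr (hdisj i j hij), hsupp]
  have hpiece : ∀ i p, sympl (S p) ((↑(B i) : Set (Fin n)).indicator v) = 0 := by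
    intro i p
    by_cases hmeet : ∃ u ∈ B i, S p u ≠ 0
    · obtain ⟨u, hu, hSu⟩ := hmeet
      rw [sympl_indicator_of_disjoint_support fun j hj => ?_, hv p]
      by_cases hjR : j ∈ univ.biUnion B
      · obtain ⟨i', -, hj'⟩ := mem_biUnion.mp hjR
        have hne : i' ≠ i := by rintro rfl; exact hj hj'
        refine .inl (not_not.mp fun hSj => hnoedge i' i hne j hj' u hu ⟨?_, p, hSj, hSu⟩)
        rintro rfl; exact hj hu
      · exact .inr (mem_paulisOn.mp hvR j hjR)
    · push Not at hmeet
      refine sympl_eq_zero_of_disjoint_support fun j => ?_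
      by_cases hj : j ∈ B i
      · exact .inl (hmeet j hj)
      · exact .inr (Set.indicator_of_notMem (by simpa using hj) _)
  rw [hsum]
  refine Submodule.sum_mem _ fun i _ => hB i ⟨(mem_orthogonal_stabSpan S).mpr (hpiece i),
    mem_paulisOn.mpr fun j hj => Set.indicator_of_notMem (by simpa using hj) _⟩

end Correctable

section Counting

variable {n r : ℕ} {S : Fin r → Fin n → ZMod 2 × ZMod 2}

lemma IsCorrectable.orthogonal_stabSpan_sup_paulisOn_compl
    (hcomm : ∀ i j, sympl (S i) (S j) = 0) {R : Finset (Fin n)} (hR : IsCorrectable S R) :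
    (symplForm n).orthogonal (stabSpan S ⊔ paulisOn n Rᶜ) = stabSpan S ⊓ paulisOn n R := by
  rw [LinearMap.BilinForm.orthogonal_sup, orthogonal_paulisOn_compl]
  exact le_antisymm (fun v hv => ⟨hR hv, hv.2⟩)
    (inf_le_inf_right _ (stabSpan_le_orthogonal S hcomm))

lemma IsCorrectable.finrank_eq (hcomm : ∀ i j, sympl (S i) (S j) = 0)
    {R : Finset (Fin n)} (hR : IsCorrectable S R) :
    finrank (ZMod 2) (stabSpan S) + 2 * Rᶜ.card
        + finrank (ZMod 2) (stabSpan S ⊓ paulisOn n R : Submodule (ZMod 2) _)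
      = 2 * n + finrank (ZMod 2) (stabSpan S ⊓ paulisOn n Rᶜ : Submodule (ZMod 2) _) := by
  have horth := LinearMap.BilinForm.finrank_add_finrank_orthogonal' (B := symplForm n)
    (stabSpan S ⊔ paulisOn n Rᶜ)
  rw [hR.orthogonal_stabSpan_sup_paulisOn_compl hcomm, ker_symplForm,
    inf_bot_eq, finrank_bot, add_zero, Module.finrank_pi_fintype] at horth
  have hsup := Submodule.finrank_sup_add_finrank_inf_eq (stabSpan S) (paulisOn n Rᶜ)
  simp only [Module.finrank_prod, Module.finrank_self, Finset.sum_const, card_univ,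
    Fintype.card_fin, smul_eq_mul] at horth
  rw [finrank_paulisOn] at hsup
  omega

theorem card_add_card_le_finrank_stabSpan (hcomm : ∀ i j, sympl (S i) (S j) = 0)
    {R₁ R₂ : Finset (Fin n)} (hdisj : Disjoint R₁ R₂)
    (h₁ : IsCorrectable S R₁) (h₂ : IsCorrectable S R₂) :
    R₁.card + R₂.card ≤ finrank (ZMod 2) (stabSpan S) := by
  have hle₁ : finrank (ZMod 2) (stabSpan S ⊓ paulisOn n R₁ : Submodule (ZMod 2) _) ≤
      finrank (ZMod 2) (stabSpan S ⊓ paulisOn n R₂ᶜ : Submodule (ZMod 2) _) :=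
    Submodule.finrank_mono <| inf_le_inf_left _ <|
      paulisOn_mono (subset_compl_iff_disjoint_right.mpr hdisj)
  have hle₂ : finrank (ZMod 2) (stabSpan S ⊓ paulisOn n R₂ : Submodule (ZMod 2) _) ≤
      finrank (ZMod 2) (stabSpan S ⊓ paulisOn n R₁ᶜ : Submodule (ZMod 2) _) :=
    Submodule.finrank_mono <| inf_le_inf_left _ <|
      paulisOn_mono (subset_compl_iff_disjoint_right.mpr hdisj.symm)
  have hc₁ := card_compl_add_card R₁
  have hc₂ := card_compl_add_card R₂
  have := h₁.finrank_eq hcomm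
  have := h₂.finrank_eq hcomm
  simp only [Fintype.card_fin] at hc₁ hc₂
  omega

end Counting

theorem stmt7_general (n r k d s t : ℕ) (S : Fin r → Fin n → ZMod 2 × ZMod 2)
    (hcomm : ∀ i j, sympl (S i) (S j) = 0)
    (hk : k + Module.finrank (ZMod 2) (stabSpan S) = n)
    (hd : ∀ v : Fin n → ZMod 2 × ZMod 2, (∀ i, sympl (S i) v = 0) → v ∉ stabSpan S →
      d ≤ qWeight v)
    (A : Finset (Fin n)) (B : Fin s → Finset (Fin n)) (C : Fin t → Finset (Fin n))
    (hdisjB : ∀ i j, i ≠ j → Disjoint (B i) (B j))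
    (hdisjC : ∀ i j, i ≠ j → Disjoint (C i) (C j))
    (hdisjBC : ∀ i j, Disjoint (B i) (C j))
    (hcover : A ∪ Finset.univ.biUnion B ∪ Finset.univ.biUnion C = Finset.univ)
    (hnoedgeB : ∀ i j, i ≠ j → ∀ u ∈ B i, ∀ v ∈ B j, ¬ (qConnGraph S).Adj u v)
    (hnoedgeC : ∀ i j, i ≠ j → ∀ u ∈ C i, ∀ v ∈ C j, ¬ (qConnGraph S).Adj u v) :
    d ≤ max (Finset.univ.sup fun i => (B i).card) (Finset.univ.sup fun j => (C j).card) ∨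
      k ≤ A.card := by
  refine or_iff_not_imp_left.mpr fun hsmall => ?_
  rw [not_le, max_lt_iff] at hsmall
  have hB : IsCorrectable S (univ.biUnion B) :=
    isCorrectable_biUnion S B hdisjB hnoedgeB fun i =>
      isCorrectable_of_card_lt S hd <|
        (le_sup (f := fun i => (B i).card) (mem_univ i)).trans_lt hsmall.1
  have hC : IsCorrectable S (univ.biUnion C) :=
    isCorrectable_biUnion S C hdisjC hnoedgeC fun j =>
      isCorrectable_of_card_lt S hd <|
        (le_sup (f := fun j => (C j).card) (mem_univ j)).trans_lt hsmall.2
  have hBC : Disjoint (univ.biUnion B) (univ.biUnion C) := by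
    simp only [disjoint_biUnion_left, disjoint_biUnion_right]
    exact fun j _ i _ => hdisjBC i j
  have hcard := card_add_card_le_finrank_stabSpan hcomm hBC hB hC
  have hcover_card : n ≤ A.card + (univ.biUnion B).card + (univ.biUnion C).card :=
    calc n = (A ∪ univ.biUnion B ∪ univ.biUnion C).card := by
          rw [hcover, card_univ, Fintype.card_fin]
      _ ≤ _ := (card_union_le _ _).trans (Nat.add_le_add_right (card_union_le _ _) _)
  omega

/-- Partition lemma for stabilizer codes: if the qubits of an `[[n,k,d]]` stabilizer code are
partitioned into `A ⊔ B_1 ⊔ ... ⊔ B_s ⊔ C_1 ⊔ ... ⊔ C_t` with no edge of the connectivity graph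
joining two distinct `B_i`'s nor two distinct `C_j`'s, then `d ≤ max(max_i |B_i|, max_j |C_j|)`
or `k ≤ |A|`. -/
theorem stmt7 (n r k d s t : ℕ) (S : Fin r → Fin n → ZMod 2 × ZMod 2)
    (hcomm : ∀ i j, sympl (S i) (S j) = 0)
    (hk : k + Module.finrank (ZMod 2) (stabSpan S) = n)
    (hd : ∀ v : Fin n → ZMod 2 × ZMod 2, (∀ i, sympl (S i) v = 0) → v ∉ stabSpan S →
      d ≤ qWeight v)
    (A : Finset (Fin n)) (B : Fin s → Finset (Fin n)) (C : Fin t → Finset (Fin n))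
    (hdisjB : ∀ i j, i ≠ j → Disjoint (B i) (B j))
    (hdisjC : ∀ i j, i ≠ j → Disjoint (C i) (C j))
    (hdisjBC : ∀ i j, Disjoint (B i) (C j))
    (hdisjAB : ∀ i, Disjoint A (B i)) (hdisjAC : ∀ j, Disjoint A (C j))
    (hcover : A ∪ Finset.univ.biUnion B ∪ Finset.univ.biUnion C = Finset.univ)
    (hnoedgeB : ∀ i j, i ≠ j → ∀ u ∈ B i, ∀ v ∈ B j, ¬ (qConnGraph S).Adj u v)
    (hnoedgeC : ∀ i j, i ≠ j → ∀ u ∈ C i, ∀ v ∈ C j, ¬ (qConnGraph S).Adj u v) :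
    d ≤ max (Finset.univ.sup fun i => (B i).card) (Finset.univ.sup fun j => (C j).card) ∨
      k ≤ A.card :=
  stmt7_general n r k d s t S hcomm hk hd A B C hdisjB hdisjC hdisjBC hcover hnoedgeB hnoedgeC
end

section
/- Let C be a classical [n,k,d] code with connectivity graph G. Then there exist vertex subsets K_1, ..., K_t of G such that Σ_i |K_i| ≥ k/2, |K_i| ≥ d/3 for each i, and each induced subgraph G[K_i] is an Ω(k/(n·polylog(n)))-expander. -/
open Finset

variable {V : Type*} [Fintype V] [DecidableEq V]

/-!
Split a set `K` that is not a `δ`-expander along a witness `W`, `|W| ≤ |K|/2`, with fewer than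
`δ|W|` edges to `K \ W`, and recurse on both sides. Charging the cut to the smaller side, a vertex is
charged at most `log₂ n` times, so the set `S` of endpoints of all cut edges has
`|S| ≤ 2δ n log₂ n`, which is at most `k/2` for `δ = k / (6 n ln n)`. The resulting pieces are
`δ`-expanders. A codeword vanishing on `S` restricts to a codeword on every piece, and on a piece of
size `< d` this restriction vanishes. Hence codewords are determined by their values on `S` and on
the pieces of size `≥ d`, so `k ≤ |S| + Σ_{|K_i| ≥ d} |K_i|`.
-/

def Finpartition.glue {α : Type*} [DecidableEq α] {s t : Finset α} (P : Finpartition s)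
    (Q : Finpartition (t \ s)) (hst : s ⊆ t) : Finpartition t where
  parts := P.parts ∪ Q.parts
  supIndep := by
    rw [Finset.supIndep_iff_pairwiseDisjoint, Finset.coe_union]
    refine P.disjoint.union Q.disjoint fun A hA B hB _ => ?_
    exact Finset.disjoint_of_subset_left (P.le hA)
      (Finset.disjoint_of_subset_right (Q.le hB) Finset.disjoint_sdiff)
  sup_parts := by
    rw [Finset.sup_union, P.sup_parts, Q.sup_parts, Finset.sup_eq_union,
      Finset.union_sdiff_of_subset hst]
  bot_notMem := by
    simp only [Finset.mem_union, not_or]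
    exact ⟨P.bot_notMem, Q.bot_notMem⟩

section Graph

variable {α : Type*} [DecidableEq α] (G : SimpleGraph α) [DecidableRel G.Adj]

def cutVertices (A B : Finset α) : Finset α :=
  {a ∈ A | ∃ b ∈ B, G.Adj a b} ∪ {b ∈ B | ∃ a ∈ A, G.Adj a b}

lemma card_cutVertices_le (A B : Finset α) : #(cutVertices G A B) ≤ 2 * bdryTo G A B := by
  set E := (A ×ˢ B).filter fun p => G.Adj p.1 p.2
  have hfst : {a ∈ A | ∃ b ∈ B, G.Adj a b} = E.image Prod.fst := by
    ext a; simp [E, and_assoc]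
  have hsnd : {b ∈ B | ∃ a ∈ A, G.Adj a b} = E.image Prod.snd := by
    ext b; simp [E]; tauto
  calc #(cutVertices G A B) ≤ #(E.image Prod.fst) + #(E.image Prod.snd) := by
        rw [← hfst, ← hsnd]; exact card_union_le _ _
    _ ≤ #E + #E := add_le_add card_image_le card_image_le
    _ = 2 * bdryTo G A B := by rw [bdryTo]; ring

end Graph

lemma mul_logb_add_mul_logb_sub_add_le {w k : ℝ} (hw : 0 < w) (hwk : 2 * w ≤ k) :
    w * Real.logb 2 w + (k - w) * Real.logb 2 (k - w) + w ≤ k * Real.logb 2 k := by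
  have hhalf : Real.logb 2 w ≤ Real.logb 2 k - 1 := by
    have := Real.logb_le_logb_of_le one_lt_two hw ((le_div_iff₀ two_pos).2 (by linarith))
    rwa [Real.logb_div (by linarith) two_ne_zero, Real.logb_self_eq_one one_lt_two] at this
  have hrest : Real.logb 2 (k - w) ≤ Real.logb 2 k :=
    Real.logb_le_logb_of_le one_lt_two (by linarith) (by linarith)
  nlinarith

section Decomposition

variable {α : Type*} [DecidableEq α] (G : SimpleGraph α) [DecidableRel G.Adj] (δ : ℝ)

def IsExpanderDecomposition (K : Finset α) (P : Finpartition K) (S : Finset α) : Prop :=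
  (∀ A ∈ P.parts, IsExpanderOn G A δ) ∧
    ∀ A ∈ P.parts, ∀ a ∈ A, ∀ b ∈ K \ A, G.Adj a b → b ∈ S

variable {G δ}

lemma isExpanderDecomposition_top {K : Finset α} (hK : IsExpanderOn G K δ) :
    IsExpanderDecomposition G δ K ⊤ ∅ := by
  have hparts : ∀ A ∈ (⊤ : Finpartition K).parts, A = K := fun A hA =>
    mem_singleton.1 (Finpartition.parts_top_subset K hA)
  refine ⟨fun A hA => hparts A hA ▸ hK, fun A hA a _ b hb _ => ?_⟩
  rw [hparts A hA, sdiff_self] at hb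
  exact absurd hb (notMem_empty b)

lemma IsExpanderDecomposition.glue {W K S₁ S₂ : Finset α} (hWK : W ⊆ K) {P₁ : Finpartition W}
    {P₂ : Finpartition (K \ W)} (h₁ : IsExpanderDecomposition G δ W P₁ S₁)
    (h₂ : IsExpanderDecomposition G δ (K \ W) P₂ S₂) :
    IsExpanderDecomposition G δ K (P₁.glue P₂ hWK) (S₁ ∪ S₂ ∪ cutVertices G W (K \ W)) := by
  refine ⟨fun A hA => (mem_union.1 hA).elim (h₁.1 A) (h₂.1 A), fun A hA a ha b hb hab => ?_⟩
  simp only [cutVertices, mem_union, mem_filter, mem_sdiff] at hb ⊢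
  rcases mem_union.1 hA with hA | hA
  · have haW := P₁.le hA ha
    by_cases hbW : b ∈ W
    · exact .inl (.inl (h₁.2 A hA a ha b (mem_sdiff.2 ⟨hbW, hb.2⟩) hab))
    · exact .inr (.inr ⟨⟨hb.1, hbW⟩, a, haW, hab⟩)
  · have haW := mem_sdiff.1 (P₂.le hA ha)
    by_cases hbW : b ∈ W
    · exact .inr (.inl ⟨hbW, a, haW, hab.symm⟩)
    · exact .inl (.inr (h₂.2 A hA a ha b (mem_sdiff.2 ⟨mem_sdiff.2 ⟨hb.1, hbW⟩, hb.2⟩) hab))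

theorem exists_isExpanderDecomposition (hδ : 0 ≤ δ) (K : Finset α) :
    ∃ (P : Finpartition K) (S : Finset α), IsExpanderDecomposition G δ K P S ∧
      (#S : ℝ) ≤ 2 * δ * #K * Real.logb 2 #K := by
  induction K using Finset.strongInduction with
  | H K ih =>
  by_cases hK : IsExpanderOn G K δ
  · refine ⟨⊤, ∅, isExpanderDecomposition_top hK, ?_⟩
    have hlogK : 0 ≤ Real.logb 2 #K :=
      div_nonneg (Real.log_natCast_nonneg #K) (Real.log_nonneg one_le_two)
    simp only [card_empty, CharP.cast_eq_zero]
    exact mul_nonneg (by positivity) hlogK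
  obtain ⟨W, hWK, hW2, hcut⟩ : ∃ W ⊆ K, 2 * #W ≤ #K ∧ (bdryIn G K W : ℝ) < δ * #W := by
    simpa [IsExpanderOn] using hK
  have hW : 0 < #W := by
    refine card_pos.2 (nonempty_iff_ne_empty.2 ?_)
    rintro rfl
    simp only [card_empty, CharP.cast_eq_zero, mul_zero] at hcut
    exact hcut.not_ge (Nat.cast_nonneg _)
  obtain ⟨P₁, S₁, hP₁, hS₁⟩ := ih W (ssubset_of_subset_of_ne hWK (by rintro rfl; omega))
  obtain ⟨P₂, S₂, hP₂, hS₂⟩ := ih (K \ W) (sdiff_ssubset hWK (card_pos.1 hW))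
  refine ⟨P₁.glue P₂ hWK, _, hP₁.glue hWK hP₂, ?_⟩
  have hC : (#(cutVertices G W (K \ W)) : ℝ) ≤ 2 * δ * #W := by
    have hbd : (#(cutVertices G W (K \ W)) : ℝ) ≤ 2 * bdryIn G K W := by
      exact_mod_cast card_cutVertices_le G W (K \ W)
    linarith
  have hKW : (#(K \ W) : ℝ) = #K - #W := by
    rw [card_sdiff_of_subset hWK, Nat.cast_sub (card_le_card hWK)]
  rw [hKW] at hS₂
  have hsplit := mul_logb_add_mul_logb_sub_add_le (k := #K) (Nat.cast_pos.2 hW)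
    (by exact_mod_cast hW2)
  have hunion : #(S₁ ∪ S₂ ∪ cutVertices G W (K \ W)) ≤
      #S₁ + #S₂ + #(cutVertices G W (K \ W)) :=
    (card_union_le _ _).trans (Nat.add_le_add_right (card_union_le _ _) _)
  calc (#(S₁ ∪ S₂ ∪ cutVertices G W (K \ W)) : ℝ)
      ≤ #S₁ + #S₂ + #(cutVertices G W (K \ W)) := by exact_mod_cast hunion
    _ ≤ 2 * δ * (#W * Real.logb 2 #W + (#K - #W) * Real.logb 2 (#K - #W) + #W) := by
      linarith
    _ ≤ 2 * δ * #K * Real.logb 2 #K := by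
      rw [mul_assoc _ (#K : ℝ)]
      exact mul_le_mul_of_nonneg_left hsplit (by positivity)

end Decomposition

theorem Submodule.finrank_le_card_of_eq_zero_of_forall_mem {R ι : Type*} [Ring R]
    [StrongRankCondition R] [Fintype ι] (W : Submodule R (ι → R)) (S : Finset ι)
    (h : ∀ x ∈ W, (∀ i ∈ S, x i = 0) → x = 0) : Module.finrank R W ≤ #S := by
  let f : W →ₗ[R] (S → R) := (LinearMap.funLeft R R ((↑) : S → ι)).comp W.subtype
  have hf : Function.Injective f := by
    rw [← LinearMap.ker_eq_bot, eq_bot_iff]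
    intro x hx
    exact (Submodule.mem_bot R).2 <| Subtype.ext <|
      h x x.2 fun i hi => congrFun (LinearMap.mem_ker.1 hx) ⟨i, hi⟩
  simpa using LinearMap.finrank_le_finrank_of_injective hf

section Code

variable {r n : ℕ} (H : Matrix (Fin r) (Fin n) (ZMod 2))

lemma mulVec_restrict_eq_zero {x : Fin n → ZMod 2} (hx : H.mulVec x = 0) (A : Finset (Fin n))
    (hA : ∀ a ∈ A, ∀ b ∉ A, (connGraph H).Adj a b → x b = 0) :
    H.mulVec (fun v => if v ∈ A then x v else 0) = 0 := by
  ext i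
  simp only [Matrix.mulVec, dotProduct, Pi.zero_apply]
  by_cases hi : ∃ a ∈ A, H i a ≠ 0
  · obtain ⟨a, ha, hia⟩ := hi
    have hterm : ∀ v, H i v * (if v ∈ A then x v else 0) = H i v * x v := by
      intro v
      by_cases hv : v ∈ A
      · simp [hv]
      by_cases hiv : H i v = 0
      · simp [hiv]
      have hav : a ≠ v := by rintro rfl; exact hv ha
      simp [hv, hA a ha v hv ⟨hav, i, hia, hiv⟩]
    rw [Finset.sum_congr rfl fun v _ => hterm v]
    exact congrFun hx i
  · push Not at hi
    refine Finset.sum_eq_zero fun v _ => ?_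
    by_cases hv : v ∈ A
    · simp [hi v hv]
    · simp [hv]

theorem finrank_ker_le_card_add_sum {d : ℕ}
    (hd : ∀ x : Fin n → ZMod 2, H.mulVec x = 0 → x ≠ 0 → d ≤ hammingNorm x)
    (P : Finpartition (univ : Finset (Fin n))) (S : Finset (Fin n))
    (hS : ∀ A ∈ P.parts, ∀ a ∈ A, ∀ b ∈ univ \ A, (connGraph H).Adj a b → b ∈ S) :
    Module.finrank (ZMod 2) (LinearMap.ker H.mulVecLin) ≤
      #S + ∑ A ∈ P.parts with d ≤ #A, #A := by
  set Big := P.parts.filter (d ≤ #·)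
  calc Module.finrank (ZMod 2) (LinearMap.ker H.mulVecLin)
      ≤ #(S ∪ Big.biUnion id) := ?_
    _ ≤ #S + #(Big.biUnion id) := card_union_le _ _
    _ ≤ #S + ∑ A ∈ Big, #A := Nat.add_le_add_left card_biUnion_le _
  refine Submodule.finrank_le_card_of_eq_zero_of_forall_mem _ _ fun x hx hvan => funext fun v => ?_
  rw [LinearMap.mem_ker, Matrix.mulVecLin_apply] at hx
  obtain ⟨A, hA, hvA⟩ := P.exists_mem (mem_univ v)
  by_cases hbig : d ≤ #A
  · exact hvan v (mem_union_right _ (mem_biUnion.2 ⟨A, mem_filter.2 ⟨hA, hbig⟩, hvA⟩))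
  -- on a part of size `< d`, the restriction of `x` is a codeword of weight `< d`
  set y : Fin n → ZMod 2 := fun v => if v ∈ A then x v else 0
  have hy : H.mulVec y = 0 := mulVec_restrict_eq_zero H hx A fun a ha b hb hab =>
    hvan b (mem_union_left _ (hS A hA a ha b (mem_sdiff.2 ⟨mem_univ b, hb⟩) hab))
  have hwt : hammingNorm y ≤ #A := card_le_card fun u hu => by
    by_contra huA
    simp [y, huA] at hu
  have hy0 : y = 0 := by
    by_contra hy0
    have := hd y hy hy0
    omega
  simpa [y, hvA] using congrFun hy0 v

end Code

/-- For any classical `[n,k,d]` code with connectivity graph `G` (and `n` large enough), there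
exist subsets `K_1, ..., K_t` of the vertices with `Σ|K_i| ≥ k/2`, `|K_i| ≥ d/3`, each inducing
an `Ω(k/(n·polylog(n)))`-expander. -/
theorem stmt10 : ∃ (c : ℝ) (p n₀ : ℕ), 0 < c ∧
    ∀ (n r k d : ℕ) (H : Matrix (Fin r) (Fin n) (ZMod 2)), n₀ ≤ n →
      Module.finrank (ZMod 2) (LinearMap.ker H.mulVecLin) = k →
      (∀ x : Fin n → ZMod 2, H.mulVec x = 0 → x ≠ 0 → d ≤ hammingNorm x) →
      ∃ (t : ℕ) (K : Fin t → Finset (Fin n)),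
        ((k : ℝ) / 2 ≤ ∑ i, ((K i).card : ℝ)) ∧
        (∀ i, (d : ℝ) / 3 ≤ (K i).card) ∧
        (∀ i, IsExpanderOn (connGraph H) (K i)
          (c * (k : ℝ) / ((n : ℝ) * Real.log n ^ p))) := by
  refine ⟨1 / 6, 1, 2, by norm_num, fun n r k d H hn hk hd => ?_⟩
  set δ : ℝ := 1 / 6 * k / (n * Real.log n ^ 1)
  have hlog : 0 < Real.log n := Real.log_pos (by exact_mod_cast hn)
  obtain ⟨P, S, hdec, hS⟩ :=
    exists_isExpanderDecomposition (G := connGraph H) (δ := δ) (by positivity) univ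
  -- with `c = 1/6` the cut budget `2δ n log₂ n` is `k / (3 ln 2) ≤ k / 2`
  have hSk : (#S : ℝ) ≤ k / 2 := by
    have hbudget : 2 * δ * n * Real.logb 2 n = k / (3 * Real.log 2) := by
      simp only [δ, Real.logb]
      field_simp
      ring
    calc (#S : ℝ) ≤ 2 * δ * n * Real.logb 2 n := by simpa using hS
      _ = k / (3 * Real.log 2) := hbudget
      _ ≤ k / 2 := div_le_div_of_nonneg_left (Nat.cast_nonneg k) two_pos
          (by linarith [Real.log_two_gt_d9])
  have hrank : (k : ℝ) ≤ #S + ∑ A ∈ P.parts with d ≤ #A, (#A : ℝ) := by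
    exact_mod_cast hk ▸ finrank_ker_le_card_add_sum H hd P S hdec.2
  set Big := P.parts.filter (d ≤ #·)
  have hBig (i : Fin #Big) := mem_filter.1 (Big.equivFin.symm i).2
  refine ⟨#Big, fun i => Big.equivFin.symm i, ?_, fun i => ?_, fun i => hdec.1 _ (hBig i).1⟩
  · rw [Equiv.sum_comp Big.equivFin.symm (fun A : Big => (#A.1 : ℝ)),
      sum_coe_sort Big (fun A => (#A : ℝ))]
    linarith
  · have : (d : ℝ) ≤ #(Big.equivFin.symm i).1 := by exact_mod_cast (hBig i).2
    linarith
end
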